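/- For every ρ ≥ 1, the sequence M* = ((n+1)^{ρn})_{n≥0} belongs to the class 𝓜, i.e. M* is increasing, M*_0 = 1, and M* satisfies conditions (i1), (i2), (i3), (i4). -/

import Mathlib

open Filter

/-- Condition (i1): logarithmic convexity. -/
def CondI1 (L : ℕ → ℝ) : Prop := ∀ n : ℕ, (L (n + 1)) ^ 2 ≤ L n * L (n + 2)

/-- Condition (i2). -/
def CondI2 (L : ℕ → ℝ) : Prop :=
  ∃ H₁ : ℝ, 0 < H₁ ∧ ∃ H₂ : ℝ, 0 < H₂ ∧ ∀ n : ℕ, H₁ * H₂ ^ n * n.factorial ≤ L n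

/-- Condition (i3). -/
def CondI3 (L : ℕ → ℝ) : Prop :=
  ∀ s : ℝ, 1 < s →
    1 < Filter.liminf (fun n : ℕ => (L ⌊s * (n : ℝ)⌋₊ / (L n) ^ s) ^ ((1 : ℝ) / n)) Filter.atTop

/-- Condition (i4). -/
def CondI4 (L : ℕ → ℝ) : Prop :=
  ∀ δ : ℝ, 0 < δ → ∃ p : ℝ, 0 < p ∧ ∃ t : ℝ, 1 < t ∧
    ∀ n m : ℕ, L (m + n) / (L m * (1 + δ) ^ m) ≤ p * t ^ n * L n

/-- The class 𝓜 of increasing sequences of positive reals with first term 1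
satisfying (i1)-(i4). -/
def ClassM (L : ℕ → ℝ) : Prop :=
  (∀ n, 0 < L n) ∧ Monotone L ∧ L 0 = 1 ∧ CondI1 L ∧ CondI2 L ∧ CondI3 L ∧ CondI4 L

/-! Write `M*ₙ = exp (ρ g(n))` with `g(x) = x log (x + 1)`. Then (i1) is the convexity of `g`,
(i2) follows from `n! ≤ (n + 1)ⁿ`, and (i3) from `g(⌊sn⌋) - s g(n) = s n log s + O(log n)`, so
the `n`-th roots in (i3) eventually stay between `exp (ρ s log s / 2)` and `exp (ρ s log s)`.
For (i4), the tangent-line bound `log z ≤ b z - 1 - log b` gives, for every `b > 0`, the almost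
subadditivity `g(x + y) ≤ g(x) + g(y) + b x + (b - log b) y`; taking `ρ b = log (1 + δ)` absorbs
the term in `x = m` into `(1 + δ)ᵐ`. -/

open Real

noncomputable def mulLogSucc (x : ℝ) : ℝ := x * log (x + 1)

section ExpSequence

variable {φ : ℕ → ℝ}

lemma condI1_exp_of_convexOn {f : ℝ → ℝ} (hf : ConvexOn ℝ (Set.Ici 0) f) :
    CondI1 fun n : ℕ => exp (f n) := by
  intro n
  have h := hf.2 (Set.mem_Ici.2 n.cast_nonneg) (Set.mem_Ici.2 (by positivity : (0 : ℝ) ≤ n + 2))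
    (by norm_num : (0 : ℝ) ≤ 1 / 2) (by norm_num : (0 : ℝ) ≤ 1 / 2) (by norm_num)
  rw [show (1 / 2 : ℝ) • (n : ℝ) + (1 / 2 : ℝ) • ((n : ℝ) + 2) = n + 1 by
    simp only [smul_eq_mul]; ring, smul_eq_mul, smul_eq_mul] at h
  rw [sq, ← exp_add, ← exp_add, exp_le_exp]
  push_cast
  linarith

lemma condI3_exp_of_bounds
    (h : ∀ s : ℝ, 1 < s → ∃ c > 0, ∃ C, ∀ᶠ n : ℕ in atTop,
      c * n ≤ φ ⌊s * n⌋₊ - s * φ n ∧ φ ⌊s * n⌋₊ - s * φ n ≤ C * n) :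
    CondI3 fun n => exp (φ n) := by
  intro s hs
  obtain ⟨c, hc, C, hφ⟩ := h s hs
  have hbounds : ∀ᶠ n : ℕ in atTop, exp c ≤ (exp (φ ⌊s * n⌋₊) / exp (φ n) ^ s) ^ ((1 : ℝ) / n) ∧
      (exp (φ ⌊s * n⌋₊) / exp (φ n) ^ s) ^ ((1 : ℝ) / n) ≤ exp C := by
    filter_upwards [hφ, eventually_gt_atTop 0] with n ⟨hlo, hhi⟩ hn
    have hn' : (0 : ℝ) < n := by exact_mod_cast hn
    rw [← exp_mul, ← exp_sub, ← exp_mul, exp_le_exp, exp_le_exp, mul_one_div,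
      le_div_iff₀ hn', div_le_iff₀ hn']
    constructor <;> linarith
  exact (one_lt_exp_iff.2 hc).trans_le <| le_liminf_of_le
    (isBoundedUnder_of_eventually_le (hbounds.mono fun _ h => h.2)).isCoboundedUnder_ge
    (hbounds.mono fun _ h => h.1)

lemma condI4_exp_of_add_le
    (h : ∀ b > 0, ∃ A > 0, ∀ m n : ℕ, φ (m + n) ≤ φ m + φ n + b * m + A * n) :
    CondI4 fun n => exp (φ n) := by
  intro δ hδ
  obtain ⟨A, hA, hφ⟩ := h (log (1 + δ)) (log_pos (by linarith))
  refine ⟨1, one_pos, exp A, one_lt_exp_iff.2 hA, fun n m => ?_⟩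
  rw [div_le_iff₀ (by positivity), ← exp_log (by linarith : 0 < 1 + δ), ← exp_nat_mul,
    ← exp_nat_mul, one_mul, ← exp_add, ← exp_add, ← exp_add, exp_le_exp]
  linarith [hφ m n]

end ExpSequence

lemma rpow_eq_exp_mul_mulLogSucc (ρ : ℝ) (n : ℕ) :
    ((n : ℝ) + 1) ^ (ρ * n) = exp (ρ * mulLogSucc n) := by
  rw [rpow_def_of_pos (by positivity), mulLogSucc]
  ring_nf

lemma monotoneOn_mulLogSucc : MonotoneOn mulLogSucc (Set.Ici 0) := by
  intro x hx y _ hxy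
  have hx : 0 ≤ x := hx
  exact mul_le_mul hxy (log_le_log (by linarith) (by linarith)) (log_nonneg (by linarith))
    (by linarith)

-- `x log (x + 1) = (x + 1) log (x + 1) - log (x + 1)`, a sum of two convex functions.
lemma convexOn_mulLogSucc : ConvexOn ℝ (Set.Ici 0) mulLogSucc := by
  have hshift : Set.Ici (0 : ℝ) ⊆ (fun z => 1 + z) ⁻¹' Set.Ioi 0 := fun x hx => by
    simp only [Set.mem_preimage, Set.mem_Ioi]; linarith [Set.mem_Ici.mp hx]
  have hmul := (convexOn_mul_log.translate_right 1).subset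
    (hshift.trans (Set.preimage_mono Set.Ioi_subset_Ici_self)) (convex_Ici 0)
  have hlog := (strictConcaveOn_log_Ioi.concaveOn.translate_right 1).neg.subset hshift
    (convex_Ici 0)
  refine (hmul.add hlog).congr fun x _ => ?_
  simp only [mulLogSucc, Function.comp_apply, Pi.add_apply, Pi.neg_apply]
  ring_nf

lemma factorial_le_exp_mulLogSucc (n : ℕ) : (n.factorial : ℝ) ≤ exp (mulLogSucc n) := by
  rw [mulLogSucc, mul_comm, ← rpow_def_of_pos (by positivity), rpow_natCast]
  exact_mod_cast n.factorial_le_pow.trans (Nat.pow_le_pow_left n.le_succ n)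

lemma log_le_mul_sub_one_sub_log {b z : ℝ} (hb : 0 < b) (hz : 0 < z) :
    log z ≤ b * z - 1 - log b := by
  have h := log_le_sub_one_of_pos (mul_pos hb hz)
  rw [log_mul hb.ne' hz.ne'] at h
  linarith

lemma mulLogSucc_floor_mul_le {s : ℝ} (hs : 1 ≤ s) (n : ℕ) :
    mulLogSucc ⌊s * n⌋₊ ≤ s * n * log s + s * mulLogSucc n := by
  have hsn : 0 ≤ s * n := by positivity
  have hfloor : (⌊s * n⌋₊ : ℝ) ≤ s * n := Nat.floor_le hsn
  calc mulLogSucc ⌊s * n⌋₊ ≤ s * n * log (s * (n + 1)) :=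
        mul_le_mul hfloor (log_le_log (by positivity) (by linarith))
          (log_nonneg (by simp)) hsn
    _ = s * n * log s + s * mulLogSucc n := by
        rw [log_mul (by positivity) (by positivity), mulLogSucc]; ring

lemma le_mulLogSucc_floor_mul {s : ℝ} (hs : 1 ≤ s) {n : ℕ} (hn : 0 < n) :
    s * n * log s - log (s * n) - s ≤ mulLogSucc ⌊s * n⌋₊ - s * mulLogSucc n := by
  have hn' : (0 : ℝ) < n := by exact_mod_cast hn
  have hsn : 1 ≤ s * n := one_le_mul_of_one_le_of_one_le hs (Nat.one_le_cast.2 hn)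
  have hfloor : s * n - 1 ≤ ⌊s * n⌋₊ := by linarith [Nat.lt_floor_add_one (s * n)]
  have hfloor_mul : (s * n - 1) * log (s * n) ≤ mulLogSucc ⌊s * n⌋₊ :=
    mul_le_mul hfloor (log_le_log (by positivity) (by linarith)) (log_nonneg hsn)
      (Nat.cast_nonneg _)
  have hlog_succ : log (n + 1) ≤ log n + 1 / n := by
    have h := log_le_sub_one_of_pos (by positivity : (0 : ℝ) < (n + 1) / n)
    rw [log_div (by positivity) hn'.ne', add_div, div_self hn'.ne'] at h
    linarith
  have hsucc : s * mulLogSucc n ≤ s * n * log n + s := by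
    have := mul_le_mul_of_nonneg_left hlog_succ (by positivity : (0 : ℝ) ≤ s * n)
    rw [mul_add, mul_one_div, mul_div_assoc, div_self hn'.ne'] at this
    rw [mulLogSucc]
    linarith
  rw [log_mul (by positivity) hn'.ne'] at hfloor_mul ⊢
  linarith

lemma eventually_log_mul_add_le {a ε : ℝ} (ha : 0 < a) (hε : 0 < ε) (c : ℝ) :
    ∀ᶠ n : ℕ in atTop, log (a * n) + c ≤ ε * n := by
  have hlog : (fun x : ℝ => log (a * x) + c) =o[atTop] id :=
    ((isLittleO_log_id_atTop.comp_tendsto (tendsto_id.const_mul_atTop' ha)).trans_isBigO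
      (Asymptotics.isBigO_const_mul_self a id atTop)).add
      (Asymptotics.isLittleO_const_id_atTop c)
  filter_upwards [(hlog.comp_tendsto tendsto_natCast_atTop_atTop).bound hε] with n hn
  simp only [Function.comp_apply, id, Real.norm_eq_abs, Nat.abs_cast] at hn
  exact (le_abs_self _).trans hn

lemma mulLogSucc_add_le {b x y : ℝ} (hb : 0 < b) (hx : 0 ≤ x) (hy : 0 ≤ y) :
    mulLogSucc (x + y) ≤ mulLogSucc x + mulLogSucc y + b * x + (b - log b) * y := by
  have hx_part : x * log (x + y + 1) ≤ x * log (x + 1) + y := by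
    have h := log_le_sub_one_of_pos (by positivity : 0 < (x + y + 1) / (x + 1))
    rw [log_div (by positivity) (by positivity)] at h
    have h' := mul_le_mul_of_nonneg_left h hx
    have : x * ((x + y + 1) / (x + 1) - 1) ≤ y := by
      rw [div_sub_one (by positivity), mul_div_assoc', div_le_iff₀ (by positivity)]
      linarith
    linarith
  have hy_part : y * log (x + y + 1) ≤ y * log (y + 1) + b * x + (b - 1 - log b) * y := by
    have h := log_le_mul_sub_one_sub_log hb (by positivity : 0 < (x + y + 1) / (y + 1))
    rw [log_div (by positivity) (by positivity)] at h
    have h' := mul_le_mul_of_nonneg_left h hy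
    have : y * (b * ((x + y + 1) / (y + 1))) ≤ b * x + b * y := by
      rw [mul_div_assoc', mul_div_assoc', div_le_iff₀ (by positivity)]
      linarith [mul_nonneg hb.le hx]
    linarith
  simp only [mulLogSucc]
  rw [add_mul]
  linarith

lemma condI3_exp_mul_mulLogSucc {ρ : ℝ} (hρ : 0 < ρ) :
    CondI3 fun n : ℕ => exp (ρ * mulLogSucc n) := by
  refine condI3_exp_of_bounds fun s hs => ?_
  have hlogs := log_pos hs
  refine ⟨ρ * (s * log s / 2), by positivity, ρ * (s * log s), ?_⟩
  filter_upwards [eventually_log_mul_add_le (by linarith : 0 < s)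
    (by positivity : 0 < s * log s / 2) s, eventually_gt_atTop 0] with n hlog hn
  have hlo := le_mulLogSucc_floor_mul hs.le hn
  have hhi := mulLogSucc_floor_mul_le hs.le n
  have hlo' : s * log s / 2 * n ≤ mulLogSucc ⌊s * n⌋₊ - s * mulLogSucc n := by linarith
  have hhi' : mulLogSucc ⌊s * n⌋₊ - s * mulLogSucc n ≤ s * log s * n := by linarith
  constructor
  · linarith [mul_le_mul_of_nonneg_left hlo' hρ.le]
  · linarith [mul_le_mul_of_nonneg_left hhi' hρ.le]

lemma condI4_exp_mul_mulLogSucc {ρ : ℝ} (hρ : 0 < ρ) :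
    CondI4 fun n : ℕ => exp (ρ * mulLogSucc n) := by
  refine condI4_exp_of_add_le fun b hb => ⟨ρ * (b / ρ - log (b / ρ)), ?_, fun m n => ?_⟩
  · exact mul_pos hρ (by linarith [log_le_sub_one_of_pos (div_pos hb hρ)])
  · have h := mulLogSucc_add_le (div_pos hb hρ) m.cast_nonneg n.cast_nonneg
    push_cast
    have := mul_le_mul_of_nonneg_left h hρ.le
    rw [mul_add, mul_add, mul_add, ← mul_assoc ρ (b / ρ), mul_div_cancel₀ _ hρ.ne'] at this
    linarith

theorem stmt_6 (ρ : ℝ) (hρ : 1 ≤ ρ) :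
    ClassM (fun n : ℕ => ((n : ℝ) + 1) ^ (ρ * n)) := by
  have hρ₀ : 0 < ρ := by linarith
  simp only [rpow_eq_exp_mul_mulLogSucc]
  refine ⟨fun n => exp_pos _, ?_, by simp [mulLogSucc],
    condI1_exp_of_convexOn (convexOn_mulLogSucc.smul hρ₀.le),
    ⟨1, one_pos, 1, one_pos, fun n => ?_⟩, condI3_exp_mul_mulLogSucc hρ₀,
    condI4_exp_mul_mulLogSucc hρ₀⟩
  · exact fun m n hmn => exp_le_exp.2 <| mul_le_mul_of_nonneg_left
      (monotoneOn_mulLogSucc (Set.mem_Ici.2 m.cast_nonneg) (Set.mem_Ici.2 n.cast_nonneg)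
        (Nat.cast_le.2 hmn)) hρ₀.le
  · rw [one_mul, one_pow, one_mul]
    refine (factorial_le_exp_mulLogSucc n).trans (exp_le_exp.2 (le_mul_of_one_le_left ?_ hρ))
    exact mul_nonneg n.cast_nonneg (log_nonneg (by simp))
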